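/- Hölder continuity of the equivalent kernel: for every κ ∈ (0, min(1, 2α − 1)) there exists a constant C > 0 depending only on α, κ, C_ψ, L_ψ, c₂ such that for every λ ∈ (0,1] and all s, t, t' ∈ [0,1]: | K̃(s,t) − K̃(s,t') | ≤ C λ^{−(1+κ)/(2α)} |t − t'|^κ. -/

import Mathlib

open MeasureTheory ProbabilityTheory Real Set

noncomputable section

/-- The uniform probability measure on `[0,1]`. -/
def unifMeasure : Measure ℝ := volume.restrict (Icc (0:ℝ) 1)

/-- The supremum norm of a function over `[0,1]`. -/
def supNorm01 (f : ℝ → ℝ) : ℝ := ⨆ x : Icc (0:ℝ) 1, |f x.1|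

/-- The function `x ↦ ∑_j c_j ψ_j(x)`. -/
def seriesFun (ψ : ℕ → ℝ → ℝ) (c : ℕ → ℝ) (x : ℝ) : ℝ := ∑' j : ℕ, c j * ψ j x

/-- The equivalent kernel. -/
def eqKer (ψ : ℕ → ℝ → ℝ) (μs : ℕ → ℝ) (lam : ℝ) (s t : ℝ) : ℝ :=
  ∑' j : ℕ, (μs j / (μs j + lam)) * (ψ j s * ψ j t)

/-- The covariance kernel `K`. -/
def origKer (ψ : ℕ → ℝ → ℝ) (μs : ℕ → ℝ) (s t : ℝ) : ℝ :=
  ∑' j : ℕ, μs j * (ψ j s * ψ j t)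

/-- Coefficients of `P_λ f`. -/
def PlamCoef (μs : ℕ → ℝ) (lam : ℝ) (c : ℕ → ℝ) : ℕ → ℝ :=
  fun j => (lam / (μs j + lam)) * c j

/-- Coefficients of `F_λ f`. -/
def FlamCoef (μs : ℕ → ℝ) (lam : ℝ) (c : ℕ → ℝ) : ℕ → ℝ :=
  fun j => (μs j / (μs j + lam)) * c j

/-- Membership in the RKHS `H`. -/
def InRKHS (μs : ℕ → ℝ) (c : ℕ → ℝ) : Prop := Summable fun j : ℕ => c j ^ 2 / μs j

/-- The squared RKHS norm. -/
def rkhsNormSq (μs : ℕ → ℝ) (c : ℕ → ℝ) : ℝ := ∑' j : ℕ, c j ^ 2 / μs j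

/-- The KRR objective. -/
def krrObj (ψ : ℕ → ℝ → ℝ) (μs : ℕ → ℝ) (lam : ℝ) {n : ℕ}
    (X Y : Fin n → ℝ) (c : ℕ → ℝ) : ℝ :=
  (1 / (n : ℝ)) * ∑ i, (Y i - seriesFun ψ c (X i)) ^ 2 + lam * rkhsNormSq μs c

/-- `c` is a minimizer of the KRR objective over `H`. -/
def IsKRRMin (ψ : ℕ → ℝ → ℝ) (μs : ℕ → ℝ) (lam : ℝ) {n : ℕ}
    (X Y : Fin n → ℝ) (c : ℕ → ℝ) : Prop :=
  InRKHS μs c ∧ ∀ g : ℕ → ℝ, InRKHS μs g → krrObj ψ μs lam X Y c ≤ krrObj ψ μs lam X Y g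

/-- Joint law of design and noise. -/
def dataMeasure (n : ℕ) (σ : ℝ) : Measure ((Fin n → ℝ) × (Fin n → ℝ)) :=
  (Measure.pi fun _ : Fin n => unifMeasure).prod
    (Measure.pi fun _ : Fin n => gaussianReal 0 (Real.toNNReal (σ ^ 2)))

/-- Law of the design alone. -/
def designMeasure (n : ℕ) : Measure (Fin n → ℝ) := Measure.pi fun _ : Fin n => unifMeasure

/-- The quantity `γ_n`. -/
def gammaN (α : ℝ) (n : ℕ) (h : ℝ) : ℝ :=
  max 1 ((n : ℝ) ^ (-1 + 1/(2*α)) * h ^ (-(1/(2*α))) * Real.sqrt (Real.log (n:ℝ))) *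
    Real.sqrt (Real.log (n:ℝ) / ((n : ℝ) * h))

/-- Kernel matrix `K(X,X)`. -/
def kerMatrix (ψ : ℕ → ℝ → ℝ) (μs : ℕ → ℝ) {n : ℕ} (X : Fin n → ℝ) :
    Matrix (Fin n) (Fin n) ℝ :=
  Matrix.of fun i j => origKer ψ μs (X i) (X j)

/-- Posterior mean function. -/
def postMean (ψ : ℕ → ℝ → ℝ) (μs : ℕ → ℝ) (lam : ℝ) {n : ℕ}
    (X Y : Fin n → ℝ) (x : ℝ) : ℝ :=
  ∑ i, ∑ j,
    origKer ψ μs x (X i) *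
      (kerMatrix ψ μs X + ((n : ℝ) * lam) • (1 : Matrix (Fin n) (Fin n) ℝ))⁻¹ i j * Y j

/-- Posterior variance function. -/
def postVar (ψ : ℕ → ℝ → ℝ) (μs : ℕ → ℝ) (lam σ : ℝ) {n : ℕ}
    (X : Fin n → ℝ) (x : ℝ) : ℝ :=
  σ ^ 2 / ((n : ℝ) * lam) *
    (origKer ψ μs x x -
      ∑ i, ∑ j,
        origKer ψ μs x (X i) *
          (kerMatrix ψ μs X + ((n : ℝ) * lam) • (1 : Matrix (Fin n) (Fin n) ℝ))⁻¹ i j *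
            origKer ψ μs (X j) x)

/-- `Ĉ_n^B(x,x)`. -/
def ChatBDiag (α : ℝ) (ψ : ℕ → ℝ → ℝ) (μs : ℕ → ℝ) (σ h : ℝ) (x : ℝ) : ℝ :=
  σ ^ 2 * h * ∑' j : ℕ, (μs j / (μs j + h ^ (2*α))) * (ψ j x) ^ 2

/-- `Ĉ_n(x,x)`. -/
def ChatDiag (α : ℝ) (ψ : ℕ → ℝ → ℝ) (μs : ℕ → ℝ) (σ h : ℝ) (x : ℝ) : ℝ :=
  σ ^ 2 * h * ∑' j : ℕ, (ψ j x) ^ 2 / (1 + h ^ (2*α) / μs j) ^ 2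

/-- Standard normal CDF `Φ`. -/
def stdNormalCDF (z : ℝ) : ℝ := (gaussianReal 0 1 (Iic z)).toReal

/-- A centered Gaussian random vector law with covariance matrix `C`. -/
def IsCenteredGaussianVec {N : ℕ} (μm : Measure (Fin N → ℝ))
    (C : Matrix (Fin N) (Fin N) ℝ) : Prop :=
  IsProbabilityMeasure μm ∧
    ∀ a : Fin N → ℝ,
      μm.map (fun w => ∑ i, a i * w i) =
        gaussianReal 0 (Real.toNNReal (∑ i, ∑ j, a i * a j * C i j))


section Aux
open Finset



lemma min_interp {A B κ : ℝ} (hA : 0 ≤ A) (hB : 0 ≤ B) (hκ0 : 0 ≤ κ) (hκ1 : κ ≤ 1) :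
    min A B ≤ A ^ (1 - κ) * B ^ κ := by
  rcases le_total A B with h | h
  · calc min A B = A := min_eq_left h
      _ = A ^ (1 - κ) * A ^ κ := by rw [← Real.rpow_add' hA (by norm_num)]; simp
      _ ≤ A ^ (1 - κ) * B ^ κ :=
        mul_le_mul_of_nonneg_left (Real.rpow_le_rpow hA h hκ0) (Real.rpow_nonneg hA _)
  · calc min A B = B := min_eq_right h
      _ = B ^ (1 - κ) * B ^ κ := by rw [← Real.rpow_add' hB (by norm_num)]; simp
      _ ≤ A ^ (1 - κ) * B ^ κ :=
        mul_le_mul_of_nonneg_right (Real.rpow_le_rpow hB h (by linarith)) (Real.rpow_nonneg hB _)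

lemma key_step {p : ℝ} (hp : 1 < p) {x : ℝ} (hx : 1 ≤ x) :
    (p - 1) * (x + 1) ^ (-p) ≤ x ^ (1 - p) - (x + 1) ^ (1 - p) := by
  have hx0 : (0:ℝ) < x := lt_of_lt_of_le one_pos hx
  have hcont : ContinuousOn (fun y : ℝ => y ^ (1 - p)) (Icc x (x + 1)) := by
    intro y hy
    exact (Real.continuousAt_rpow_const y (1 - p)
      (Or.inl (by nlinarith [hy.1] : y ≠ 0))).continuousWithinAt
  obtain ⟨c, hc, hceq⟩ := exists_hasDerivAt_eq_slope (fun y : ℝ => y ^ (1 - p))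
      (fun y : ℝ => (1 - p) * y ^ (1 - p - 1)) (by linarith : x < x + 1) hcont
      (fun y hy => Real.hasDerivAt_rpow_const (Or.inl (by nlinarith [hy.1] : y ≠ 0)))
  have hc0 : 0 < c := lt_trans hx0 hc.1
  have hsimp : (1 - p) * c ^ (1 - p - 1) = (x + 1) ^ (1 - p) - x ^ (1 - p) := by
    rw [hceq]; ring_nf
  have hexp : c ^ (1 - p - 1) = c ^ (-p) := by norm_num
  have hmono : (x + 1) ^ (-p) ≤ c ^ (-p) :=
    Real.rpow_le_rpow_of_nonpos hc0 (le_of_lt hc.2) (by linarith)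
  nlinarith [hsimp, hexp, hmono]

lemma key_step' {p : ℝ} (hp : 1 < p) {x : ℝ} (hx : 1 ≤ x) :
    (x + 1) ^ (-p) ≤ (x ^ (1 - p) - (x + 1) ^ (1 - p)) / (p - 1) := by
  rw [le_div_iff₀ (by linarith : (0:ℝ) < p - 1)]
  have := key_step hp hx
  linarith

lemma tail_bound {p : ℝ} (hp : 1 < p) {N : ℕ} (hN : 1 ≤ N) :
    ∑' j : ℕ, (((j + N : ℕ) : ℝ) + 1) ^ (-p) ≤ (N : ℝ) ^ (1 - p) / (p - 1) := by
  have hN1 : (1:ℝ) ≤ (N:ℝ) := by exact_mod_cast hN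
  apply Real.tsum_le_of_sum_range_le
  · intro n; positivity
  · intro M
    have step : ∀ j : ℕ, (((j + N : ℕ) : ℝ) + 1) ^ (-p) ≤
        (((N:ℝ) + j) ^ (1 - p) - ((N:ℝ) + (j+1)) ^ (1 - p)) / (p - 1) := by
      intro j
      have h1 : (1:ℝ) ≤ (N:ℝ) + j := le_add_of_le_of_nonneg hN1 (Nat.cast_nonneg j)
      have := key_step' hp h1
      have hcast : (((j + N : ℕ) : ℝ) + 1) = (N:ℝ) + j + 1 := by push_cast; ring
      rw [hcast]
      calc ((N:ℝ) + j + 1) ^ (-p) ≤ (((N:ℝ)+j) ^ (1 - p) - ((N:ℝ)+j+1) ^ (1 - p)) / (p - 1) := this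
        _ = (((N:ℝ) + j) ^ (1 - p) - ((N:ℝ) + (j+1)) ^ (1 - p)) / (p - 1) := by ring_nf
    calc ∑ j ∈ range M, (((j + N : ℕ) : ℝ) + 1) ^ (-p)
        ≤ ∑ j ∈ range M, (((N:ℝ) + j) ^ (1 - p) - ((N:ℝ) + (j+1)) ^ (1 - p)) / (p - 1) :=
          Finset.sum_le_sum fun j _ => step j
      _ = (∑ j ∈ range M, (((N:ℝ) + j) ^ (1 - p) - ((N:ℝ) + (j+1)) ^ (1 - p))) / (p - 1) := by
          rw [Finset.sum_div]
      _ = (((N:ℝ) + (0:ℕ)) ^ (1 - p) - ((N:ℝ) + M) ^ (1 - p)) / (p - 1) := by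
          congr 1
          have := Finset.sum_range_sub' (fun j : ℕ => ((N:ℝ) + j) ^ (1 - p)) M
          rw [← this]
          apply Finset.sum_congr rfl
          intro j _
          push_cast
          ring_nf
      _ ≤ (N : ℝ) ^ (1 - p) / (p - 1) := by
          apply div_le_div_of_nonneg_right ?_ (by linarith)
          have h1 : (0:ℝ) ≤ ((N:ℝ) + M) ^ (1 - p) := Real.rpow_nonneg (by positivity) _
          have h0 : ((N:ℝ) + ((0:ℕ):ℝ)) = (N:ℝ) := by norm_num
          rw [h0]
          linarith

lemma summable_shift_rpow {r : ℝ} (hr : r < -1) :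
    Summable (fun j : ℕ => ((j:ℝ) + 1) ^ r) := by
  have h := Real.summable_nat_rpow.mpr hr
  have := (summable_nat_add_iff (f := fun n : ℕ => (n:ℝ) ^ r) 1).mpr h
  simpa using this

lemma nu_sum_bound (α κ c₂ : ℝ) (hα : 1/2 < α) (hκ0 : 0 < κ) (hκ' : κ < 2*α - 1)
    (hc₂ : 0 < c₂)
    (μs : ℕ → ℝ) (hpos : ∀ j, 0 < μs j) (hdec : ∀ j, μs j ≤ c₂ * ((j:ℝ)+1) ^ (-(2*α)))
    (lam : ℝ) (hlam : lam ∈ Ioc (0:ℝ) 1) :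
    ∑' j : ℕ, (μs j / (μs j + lam)) * ((j:ℝ)+1) ^ κ ≤
      (2 ^ (1+κ) + c₂ / (2*α - κ - 1)) * lam ^ (-((1+κ)/(2*α))) := by
  obtain ⟨hlam0, hlam1⟩ := hlam
  have h2α : (1:ℝ) < 2*α := by linarith
  set f : ℕ → ℝ := fun j => (μs j / (μs j + lam)) * ((j:ℝ)+1) ^ κ with hf
  have hν0 : ∀ j, 0 ≤ μs j / (μs j + lam) := fun j =>
    div_nonneg (hpos j).le (by linarith [hpos j])
  have hν1 : ∀ j, μs j / (μs j + lam) ≤ 1 := fun j =>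
    div_le_one_of_le₀ (by linarith) (by linarith [hpos j])
  have hνlam : ∀ j, μs j / (μs j + lam) ≤ (c₂ / lam) * ((j:ℝ)+1) ^ (-(2*α)) := by
    intro j
    have : μs j / (μs j + lam) ≤ μs j / lam :=
      div_le_div_of_nonneg_left (hpos j).le hlam0 (by linarith [hpos j])
    calc μs j / (μs j + lam) ≤ μs j / lam := this
      _ ≤ (c₂ * ((j:ℝ)+1) ^ (-(2*α))) / lam :=
        (div_le_div_iff_of_pos_right hlam0).mpr (hdec j)
      _ = (c₂ / lam) * ((j:ℝ)+1) ^ (-(2*α)) := by ring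
  have hfparts : ∀ j, 0 ≤ f j := fun j =>
    mul_nonneg (hν0 j) (Real.rpow_nonneg (by positivity) _)
  have hg : Summable (fun j : ℕ => (c₂ / lam) * ((j:ℝ)+1) ^ (κ - 2*α)) :=
    (summable_shift_rpow (by linarith)).mul_left _
  have hfg : ∀ j, f j ≤ (c₂ / lam) * ((j:ℝ)+1) ^ (κ - 2*α) := by
    intro j
    have hj1 : (0:ℝ) < (j:ℝ) + 1 := by positivity
    calc f j ≤ ((c₂ / lam) * ((j:ℝ)+1) ^ (-(2*α))) * ((j:ℝ)+1) ^ κ :=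
        mul_le_mul_of_nonneg_right (hνlam j) (Real.rpow_nonneg hj1.le _)
      _ = (c₂ / lam) * (((j:ℝ)+1) ^ (-(2*α)) * ((j:ℝ)+1) ^ κ) := by ring
      _ = (c₂ / lam) * ((j:ℝ)+1) ^ (κ - 2*α) := by
          rw [← Real.rpow_add hj1]; ring_nf
  have hsum : Summable f := Summable.of_nonneg_of_le hfparts hfg hg
  -- split point
  set x : ℝ := lam ^ (-(1/(2*α))) with hxdef
  have hx1 : (1:ℝ) ≤ x :=
    Real.one_le_rpow_of_pos_of_le_one_of_nonpos hlam0 hlam1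
      (neg_nonpos.mpr (by positivity))
  have hx0 : (0:ℝ) < x := lt_of_lt_of_le one_pos hx1
  set N : ℕ := ⌈x⌉₊ with hNdef
  have hN1 : 1 ≤ N := Nat.one_le_ceil_iff.mpr hx0
  have hxN : x ≤ (N:ℝ) := Nat.le_ceil x
  have hN2x : (N:ℝ) ≤ 2 * x := by
    have := Nat.ceil_lt_add_one hx0.le
    linarith
  set p : ℝ := 2*α - κ with hpdef
  have hp1 : 1 < p := by simp only [hpdef]; linarith
  set L : ℝ := lam ^ (-((1+κ)/(2*α))) with hLdef
  have hL0 : 0 < L := Real.rpow_pos_of_pos hlam0 _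
  have hαne : (2*α) ≠ 0 := by linarith
  have hxL : x ^ (1+κ) = L := by
    rw [hxdef, hLdef, ← Real.rpow_mul hlam0.le]
    congr 1
    field_simp
  have hxtail : lam⁻¹ * x ^ (1 - p) = L := by
    rw [hxdef, hLdef, ← Real.rpow_mul hlam0.le, ← Real.rpow_neg_one lam,
      ← Real.rpow_add hlam0]
    congr 1
    rw [hpdef]
    field_simp
    ring
  -- split the sum
  rw [← Summable.sum_add_tsum_nat_add N hsum]
  have head : ∑ i ∈ range N, f i ≤ 2 ^ (1+κ) * L := by
    have hterm : ∀ i ∈ range N, f i ≤ (N:ℝ) ^ κ := by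
      intro i hi
      have hi' : (i:ℝ) + 1 ≤ (N:ℝ) := by
        have := Finset.mem_range.mp hi
        exact_mod_cast this
      calc f i ≤ 1 * ((i:ℝ)+1) ^ κ :=
          mul_le_mul_of_nonneg_right (hν1 i) (Real.rpow_nonneg (by positivity) _)
        _ = ((i:ℝ)+1) ^ κ := one_mul _
        _ ≤ (N:ℝ) ^ κ := Real.rpow_le_rpow (by positivity) hi' hκ0.le
    calc ∑ i ∈ range N, f i ≤ ∑ _i ∈ range N, (N:ℝ) ^ κ := Finset.sum_le_sum hterm
      _ = (N:ℝ) * (N:ℝ) ^ κ := by rw [Finset.sum_const, Finset.card_range]; ring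
      _ = (N:ℝ) ^ (1+κ) := by
          rw [Real.rpow_add (by exact_mod_cast Nat.pos_of_ne_zero (by omega)), Real.rpow_one]
      _ ≤ (2*x) ^ (1+κ) := Real.rpow_le_rpow (by positivity) hN2x (by linarith)
      _ = 2 ^ (1+κ) * x ^ (1+κ) := Real.mul_rpow (by norm_num) hx0.le
      _ = 2 ^ (1+κ) * L := by rw [hxL]
  have tail : ∑' i : ℕ, f (i + N) ≤ c₂ / (2*α - κ - 1) * L := by
    have hshift : Summable (fun i : ℕ => f (i + N)) := (summable_nat_add_iff N).mpr hsum
    have hgshift : Summable (fun i : ℕ => (c₂ / lam) * (((i + N : ℕ):ℝ)+1) ^ (-p)) := by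
      have := (summable_nat_add_iff (f := fun n : ℕ => (c₂ / lam) * (((n:ℕ):ℝ)+1) ^ (-p)) N).mpr
        (by
          have : Summable (fun j : ℕ => ((j:ℝ) + 1) ^ (-p)) :=
            summable_shift_rpow (by rw [hpdef]; linarith)
          exact this.mul_left _)
      exact this
    have hle : ∀ i : ℕ, f (i + N) ≤ (c₂ / lam) * (((i + N : ℕ):ℝ)+1) ^ (-p) := by
      intro i
      have := hfg (i + N)
      have hexp : κ - 2*α = -p := by rw [hpdef]; ring
      rwa [hexp] at this
    have hbound := tail_bound hp1 hN1
    calc ∑' i : ℕ, f (i + N) ≤ ∑' i : ℕ, (c₂ / lam) * (((i + N : ℕ):ℝ)+1) ^ (-p) :=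
        Summable.tsum_le_tsum hle hshift hgshift
      _ = (c₂ / lam) * ∑' i : ℕ, (((i + N : ℕ):ℝ)+1) ^ (-p) := tsum_mul_left
      _ ≤ (c₂ / lam) * ((N:ℝ) ^ (1 - p) / (p - 1)) := by
          apply mul_le_mul_of_nonneg_left hbound (by positivity)
      _ ≤ (c₂ / lam) * (x ^ (1 - p) / (p - 1)) := by
          apply mul_le_mul_of_nonneg_left ?_ (by positivity)
          apply div_le_div_of_nonneg_right ?_ (by linarith)
          exact Real.rpow_le_rpow_of_nonpos hx0 hxN (by linarith)
      _ = c₂ / (p - 1) * (lam⁻¹ * x ^ (1 - p)) := by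
          field_simp
      _ = c₂ / (2*α - κ - 1) * L := by rw [hxtail, hpdef]
  calc ∑ i ∈ range N, f i + ∑' i : ℕ, f (i + N)
      ≤ 2 ^ (1+κ) * L + c₂ / (2*α - κ - 1) * L := add_le_add head tail
    _ = (2 ^ (1+κ) + c₂ / (2*α - κ - 1)) * L := by ring
end Aux

set_option maxHeartbeats 1000000 in
/-- Hölder continuity of the equivalent kernel. -/
theorem statement18 (α κ Cψ Lψ c₂ : ℝ) (hα : 1/2 < α) (hκ0 : 0 < κ)
    (hκ1 : κ < min 1 (2*α - 1)) (hCψ : 0 < Cψ) (hLψ : 0 < Lψ) (hc₂ : 0 < c₂) :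
    ∃ C > (0:ℝ), ∀ ψ : ℕ → ℝ → ℝ, ∀ μs : ℕ → ℝ,
      (∀ j : ℕ, ∀ t ∈ Icc (0:ℝ) 1, |ψ j t| ≤ Cψ) →
      (∀ j : ℕ, ∀ s ∈ Icc (0:ℝ) 1, ∀ t ∈ Icc (0:ℝ) 1,
        |ψ j t - ψ j s| ≤ Lψ * ((j:ℝ) + 1) * |t - s|) →
      (∀ j : ℕ, 0 < μs j) →
      (∀ j : ℕ, μs j ≤ c₂ * ((j:ℝ) + 1) ^ (-(2*α))) →
      ∀ lam : ℝ, lam ∈ Ioc (0:ℝ) 1 →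
      ∀ s ∈ Icc (0:ℝ) 1, ∀ t ∈ Icc (0:ℝ) 1, ∀ t' ∈ Icc (0:ℝ) 1,
        |eqKer ψ μs lam s t - eqKer ψ μs lam s t'| ≤
          C * lam ^ (-((1 + κ)/(2*α))) * |t - t'| ^ κ := by
  have hκa : κ < 1 := lt_of_lt_of_le hκ1 (min_le_left _ _)
  have hκb : κ < 2*α - 1 := lt_of_lt_of_le hκ1 (min_le_right _ _)
  have hC₀ : (0:ℝ) < 2 ^ (1+κ) + c₂ / (2*α - κ - 1) := by
    have h1 : (0:ℝ) < (2:ℝ) ^ (1+κ) := Real.rpow_pos_of_pos (by norm_num) _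
    have h2 : (0:ℝ) < c₂ / (2*α - κ - 1) := div_pos hc₂ (by linarith)
    linarith
  have h2Cψ : (0:ℝ) < (2*Cψ) ^ (1-κ) := Real.rpow_pos_of_pos (by linarith) _
  have hLκ : (0:ℝ) < Lψ ^ κ := Real.rpow_pos_of_pos hLψ _
  refine ⟨Cψ * (2*Cψ) ^ (1-κ) * Lψ ^ κ * (2 ^ (1+κ) + c₂ / (2*α - κ - 1)), by positivity, ?_⟩
  intro ψ μs hb hlip hpos hdec lam hlam s hs t ht t' ht'
  obtain ⟨hlam0, hlam1⟩ := hlam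
  set ν : ℕ → ℝ := fun j => μs j / (μs j + lam) with hνdef
  have hν0 : ∀ j, 0 ≤ ν j := fun j => div_nonneg (hpos j).le (by linarith [hpos j])
  have hν1 : ∀ j, ν j ≤ 1 := fun j => div_le_one_of_le₀ (by linarith) (by linarith [hpos j])
  have hνlam : ∀ j, ν j ≤ (c₂ / lam) * ((j:ℝ)+1) ^ (-(2*α)) := by
    intro j
    calc ν j ≤ μs j / lam :=
        div_le_div_of_nonneg_left (hpos j).le hlam0 (by linarith [hpos j])
      _ ≤ (c₂ * ((j:ℝ)+1) ^ (-(2*α))) / lam := (div_le_div_iff_of_pos_right hlam0).mpr (hdec j)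
      _ = (c₂ / lam) * ((j:ℝ)+1) ^ (-(2*α)) := by ring
  have hαgt : (1:ℝ) < 2*α := by linarith
  have hgsum : Summable (fun j : ℕ => (c₂ / lam) * (Cψ^2) * ((j:ℝ)+1) ^ (-(2*α))) :=
    (summable_shift_rpow (by linarith)).mul_left _
  -- summability of the kernel series
  have habs : ∀ u : ℝ, u ∈ Icc (0:ℝ) 1 → ∀ v : ℝ, v ∈ Icc (0:ℝ) 1 →
      ∀ j : ℕ, |ν j * (ψ j u * ψ j v)| ≤ (c₂ / lam) * (Cψ^2) * ((j:ℝ)+1) ^ (-(2*α)) := by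
    intro u hu v hv j
    have h1 : |ν j * (ψ j u * ψ j v)| = ν j * (|ψ j u| * |ψ j v|) := by
      rw [abs_mul, abs_mul, abs_of_nonneg (hν0 j)]
    rw [h1]
    have h2 : |ψ j u| * |ψ j v| ≤ Cψ^2 := by
      have := hb j u hu
      have := hb j v hv
      nlinarith [abs_nonneg (ψ j u), abs_nonneg (ψ j v)]
    calc ν j * (|ψ j u| * |ψ j v|) ≤ ((c₂ / lam) * ((j:ℝ)+1) ^ (-(2*α))) * (Cψ^2) := by
          apply mul_le_mul (hνlam j) h2 (by positivity) ?_
          positivity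
      _ = (c₂ / lam) * (Cψ^2) * ((j:ℝ)+1) ^ (-(2*α)) := by ring
  have hsum_t : Summable (fun j : ℕ => ν j * (ψ j s * ψ j t)) :=
    Summable.of_abs (Summable.of_nonneg_of_le (fun j => abs_nonneg _)
      (fun j => habs s hs t ht j) hgsum)
  have hsum_t' : Summable (fun j : ℕ => ν j * (ψ j s * ψ j t')) :=
    Summable.of_abs (Summable.of_nonneg_of_le (fun j => abs_nonneg _)
      (fun j => habs s hs t' ht' j) hgsum)
  -- the summable majorant
  set c₀ : ℝ := Cψ * (2*Cψ) ^ (1-κ) * Lψ ^ κ * |t - t'| ^ κ with hc₀def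
  have hc₀0 : 0 ≤ c₀ := by positivity
  have hDsum : Summable (fun j : ℕ => c₀ * (ν j * ((j:ℝ)+1) ^ κ)) := by
    apply Summable.mul_left
    apply Summable.of_nonneg_of_le
      (fun j => mul_nonneg (hν0 j) (Real.rpow_nonneg (by positivity) _))
      (fun j => ?_) ((summable_shift_rpow (r := κ - 2*α) (by linarith)).mul_left (c₂ / lam))
    have hj1 : (0:ℝ) < (j:ℝ) + 1 := by positivity
    calc ν j * ((j:ℝ)+1) ^ κ ≤ ((c₂ / lam) * ((j:ℝ)+1) ^ (-(2*α))) * ((j:ℝ)+1) ^ κ :=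
        mul_le_mul_of_nonneg_right (hνlam j) (Real.rpow_nonneg hj1.le _)
      _ = (c₂ / lam) * (((j:ℝ)+1) ^ (-(2*α)) * ((j:ℝ)+1) ^ κ) := by ring
      _ = (c₂ / lam) * ((j:ℝ)+1) ^ (κ - 2*α) := by rw [← Real.rpow_add hj1]; ring_nf
  -- pointwise bound on the difference terms
  have hptwise : ∀ j : ℕ, |ν j * (ψ j s * ψ j t) - ν j * (ψ j s * ψ j t')| ≤
      c₀ * (ν j * ((j:ℝ)+1) ^ κ) := by
    intro j
    have hj1 : (0:ℝ) ≤ (j:ℝ) + 1 := by positivity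
    have heq : ν j * (ψ j s * ψ j t) - ν j * (ψ j s * ψ j t') =
        ν j * ψ j s * (ψ j t - ψ j t') := by ring
    rw [heq, abs_mul, abs_mul, abs_of_nonneg (hν0 j), mul_assoc]
    have hmin : |ψ j t - ψ j t'| ≤ min (2*Cψ) (Lψ * ((j:ℝ)+1) * |t - t'|) := by
      refine le_min ?_ ?_
      · have h1 := hb j t ht
        have h2 := hb j t' ht'
        calc |ψ j t - ψ j t'| ≤ |ψ j t| + |ψ j t'| := abs_sub _ _
          _ ≤ 2*Cψ := by linarith
      · exact hlip j t' ht' t ht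
    have hinterp : min (2*Cψ) (Lψ * ((j:ℝ)+1) * |t - t'|) ≤
        (2*Cψ) ^ (1-κ) * (Lψ * ((j:ℝ)+1) * |t - t'|) ^ κ :=
      min_interp (by linarith) (by positivity) hκ0.le hκa.le
    have hexpand : (Lψ * ((j:ℝ)+1) * |t - t'|) ^ κ =
        Lψ ^ κ * ((j:ℝ)+1) ^ κ * |t - t'| ^ κ := by
      rw [Real.mul_rpow (by positivity) (abs_nonneg _), Real.mul_rpow hLψ.le hj1]
    have hψs : |ψ j s| ≤ Cψ := hb j s hs
    have hchain : |ψ j s| * |ψ j t - ψ j t'| ≤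
        Cψ * ((2*Cψ) ^ (1-κ) * (Lψ ^ κ * ((j:ℝ)+1) ^ κ * |t - t'| ^ κ)) := by
      calc |ψ j s| * |ψ j t - ψ j t'|
          ≤ Cψ * ((2*Cψ) ^ (1-κ) * (Lψ * ((j:ℝ)+1) * |t - t'|) ^ κ) := by
            apply mul_le_mul hψs (le_trans hmin hinterp) (abs_nonneg _) hCψ.le
        _ = Cψ * ((2*Cψ) ^ (1-κ) * (Lψ ^ κ * ((j:ℝ)+1) ^ κ * |t - t'| ^ κ)) := by
            rw [hexpand]
    calc ν j * (|ψ j s| * |ψ j t - ψ j t'|)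
        ≤ ν j * (Cψ * ((2*Cψ) ^ (1-κ) * (Lψ ^ κ * ((j:ℝ)+1) ^ κ * |t - t'| ^ κ))) :=
          mul_le_mul_of_nonneg_left hchain (hν0 j)
      _ = c₀ * (ν j * ((j:ℝ)+1) ^ κ) := by rw [hc₀def]; ring
  -- put everything together
  have hdiff : eqKer ψ μs lam s t - eqKer ψ μs lam s t' =
      ∑' j : ℕ, (ν j * (ψ j s * ψ j t) - ν j * (ψ j s * ψ j t')) := by
    rw [eqKer, eqKer, ← Summable.tsum_sub hsum_t hsum_t']
  have habssum : Summable (fun j : ℕ => |ν j * (ψ j s * ψ j t) - ν j * (ψ j s * ψ j t')|) :=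
    Summable.of_nonneg_of_le (fun j => abs_nonneg _) hptwise hDsum
  have hmain := nu_sum_bound α κ c₂ hα hκ0 hκb hc₂ μs hpos hdec lam ⟨hlam0, hlam1⟩
  calc |eqKer ψ μs lam s t - eqKer ψ μs lam s t'|
      = |∑' j : ℕ, (ν j * (ψ j s * ψ j t) - ν j * (ψ j s * ψ j t'))| := by rw [hdiff]
    _ ≤ ∑' j : ℕ, |ν j * (ψ j s * ψ j t) - ν j * (ψ j s * ψ j t')| := by
        have : Summable fun j : ℕ =>
            ‖ν j * (ψ j s * ψ j t) - ν j * (ψ j s * ψ j t')‖ := by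
          simpa [Real.norm_eq_abs] using habssum
        simpa [Real.norm_eq_abs] using norm_tsum_le_tsum_norm this
    _ ≤ ∑' j : ℕ, c₀ * (ν j * ((j:ℝ)+1) ^ κ) := Summable.tsum_le_tsum hptwise habssum hDsum
    _ = c₀ * ∑' j : ℕ, (ν j * ((j:ℝ)+1) ^ κ) := tsum_mul_left
    _ ≤ c₀ * ((2 ^ (1+κ) + c₂ / (2*α - κ - 1)) * lam ^ (-((1+κ)/(2*α)))) :=
        mul_le_mul_of_nonneg_left hmain hc₀0
    _ = Cψ * (2*Cψ) ^ (1-κ) * Lψ ^ κ * (2 ^ (1+κ) + c₂ / (2*α - κ - 1)) *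
          lam ^ (-((1 + κ)/(2*α))) * |t - t'| ^ κ := by rw [hc₀def]; ring
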